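/- The completely bounded norm of a homogeneous form p of degree t equals the infimum of ‖T‖_cb over all t-tensors T representing p: ‖p‖_cb = inf { ‖T‖_cb : T(x) = p(x) for all x ∈ ℝ^n }, where the left-hand side is defined via symmetrized decompositions of the unique symmetric tensor T_p. -/

import Mathlib

noncomputable section

/-- `d × d` real matrices, viewed as operators on Euclidean space (with operator norm). -/
abbrev Mat (d : ℕ) := EuclideanSpace ℝ (Fin d) →L[ℝ] EuclideanSpace ℝ (Fin d)

/-- Evaluation of a `t`-tensor as a degree-`t` form: `T(x) = ∑_i T_i x_{i₁}⋯x_{i_t}`. -/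
def tEval {n t : ℕ} (T : (Fin t → Fin n) → ℝ) (x : Fin n → ℝ) : ℝ :=
  ∑ i : Fin t → Fin n, T i * ∏ s, x (i s)

/-- Permutation action on tensors: `(T∘σ)_i = T_{σ(i)}`. -/
def permT {n t : ℕ} (T : (Fin t → Fin n) → ℝ) (σ : Equiv.Perm (Fin t)) :
    (Fin t → Fin n) → ℝ :=
  fun i => T (i ∘ σ)

/-- The completely bounded norm of a `t`-tensor (with `t` contraction-valued maps). -/
def cbNormT {n t : ℕ} (T : (Fin t → Fin n) → ℝ) : ℝ :=
  sSup {c : ℝ | ∃ (d : ℕ) (A : Fin t → Fin n → Mat d),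
    (∀ s j, ‖A s j‖ ≤ 1) ∧
    c = ‖∑ i : Fin t → Fin n, T i • (List.ofFn fun s => A s (i s)).prod‖}

/-! A decomposition `(T_σ)` of `T_p` gives the representing tensor `∑ σ, T_σ`, of cb norm at most
`∑ σ, ‖T_σ‖_cb` by the triangle inequality. Conversely, if `T` represents the form, its
symmetrization `∑ σ, T ∘ σ` is a symmetric tensor with the form of `t! • T_p`, hence equals
`t! • T_p`: the coefficient of a monomial in the form of a symmetric tensor is its common value on
the orbit of index tuples times the size of that orbit. So the constant family `T / t!` is a
decomposition of total cost `‖T‖_cb`. -/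

open MvPolynomial Finset

namespace TensorForm

variable {n t : ℕ}

def indexDegree (i : Fin t → Fin n) : Fin n →₀ ℕ := ∑ s, Finsupp.single (i s) 1

lemma indexDegree_apply (i : Fin t → Fin n) (a : Fin n) :
    indexDegree i a = #{s | i s = a} := by
  simp only [indexDegree, Finsupp.finsetSum_apply, Finsupp.single_apply, Finset.card_filter]

lemma exists_perm_eq_comp_of_indexDegree_eq {i i' : Fin t → Fin n}
    (h : indexDegree i = indexDegree i') : ∃ σ : Equiv.Perm (Fin t), i = i' ∘ σ := by
  have hfiber (a : Fin n) : Fintype.card {s // i s = a} = Fintype.card {s // i' s = a} := by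
    simp only [Fintype.card_subtype, ← indexDegree_apply, h]
  let e a : {s // i s = a} ≃ {s // i' s = a} := Fintype.equivOfCardEq (hfiber a)
  refine ⟨(Equiv.sigmaFiberEquiv i).symm.trans
    ((Equiv.sigmaCongrRight e).trans (Equiv.sigmaFiberEquiv i')), funext fun s => ?_⟩
  exact ((e (i s)) ⟨s, rfl⟩).2.symm

lemma prod_X_eq_monomial_indexDegree (i : Fin t → Fin n) :
    ∏ s, (X (i s) : MvPolynomial (Fin n) ℝ) = monomial (indexDegree i) 1 := by
  simp only [indexDegree, monomial_sum_one, X]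

def formPoly : ((Fin t → Fin n) → ℝ) →ₗ[ℝ] MvPolynomial (Fin n) ℝ :=
  Fintype.linearCombination ℝ fun i => ∏ s, X (i s)

lemma eval_formPoly (T : (Fin t → Fin n) → ℝ) (x : Fin n → ℝ) :
    eval x (formPoly T) = tEval T x := by
  simp [formPoly, Fintype.linearCombination_apply, tEval]

lemma formPoly_eq_formPoly_iff {T T' : (Fin t → Fin n) → ℝ} :
    formPoly T = formPoly T' ↔ ∀ x, tEval T x = tEval T' x := by
  simp only [MvPolynomial.funext_iff, eval_formPoly]

lemma coeff_formPoly (T : (Fin t → Fin n) → ℝ) (m : Fin n →₀ ℕ) :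
    coeff m (formPoly T) = ∑ i with indexDegree i = m, T i := by
  simp [formPoly, Fintype.linearCombination_apply, coeff_sum, prod_X_eq_monomial_indexDegree,
    coeff_monomial, Finset.sum_filter]

lemma formPoly_permT (T : (Fin t → Fin n) → ℝ) (σ : Equiv.Perm (Fin t)) :
    formPoly (permT T σ) = formPoly T := by
  simp only [formPoly, Fintype.linearCombination_apply, permT]
  refine Fintype.sum_equiv (σ.symm.arrowCongr (Equiv.refl _)) _ _ fun i => ?_
  simp only [Equiv.arrowCongr_apply, Equiv.symm_symm, Equiv.coe_refl, Function.id_comp]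
  rw [← Equiv.prod_comp σ]
  rfl

lemma eq_zero_of_formPoly_eq_zero {S : (Fin t → Fin n) → ℝ}
    (hS : ∀ σ, permT S σ = S) (h : formPoly S = 0) : S = 0 := by
  funext i₀
  have hconst : ∀ i ∈ ({i | indexDegree i = indexDegree i₀} : Finset _), S i = S i₀ := by
    intro i hi
    obtain ⟨σ, rfl⟩ := exists_perm_eq_comp_of_indexDegree_eq (Finset.mem_filter.1 hi).2
    exact congrFun (hS σ) i₀
  have hcoeff := congrArg (coeff (indexDegree i₀)) h
  rw [coeff_formPoly, coeff_zero, Finset.sum_congr rfl hconst, Finset.sum_const,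
    nsmul_eq_mul] at hcoeff
  have hcard : (#{i : Fin t → Fin n | indexDegree i = indexDegree i₀} : ℝ) ≠ 0 := by
    exact_mod_cast (Finset.card_pos.2 ⟨i₀, by simp⟩).ne'
  exact (mul_eq_zero.1 hcoeff).resolve_left hcard


lemma permT_sum_permT (T : (Fin t → Fin n) → ℝ) (τ : Equiv.Perm (Fin t)) :
    permT (∑ σ, permT T σ) τ = ∑ σ, permT T σ := by
  funext i
  simp only [permT, Finset.sum_apply]
  exact Fintype.sum_equiv (Equiv.mulLeft τ) _ _ fun σ => rfl

lemma sum_permT_eq_factorial_smul {T Tp : (Fin t → Fin n) → ℝ}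
    (hsym : ∀ σ, permT Tp σ = Tp) (h : formPoly T = formPoly Tp) :
    ∑ σ, permT T σ = (t.factorial : ℝ) • Tp := by
  rw [← sub_eq_zero]
  apply eq_zero_of_formPoly_eq_zero
  · intro τ
    funext i
    have hsum := congrFun (permT_sum_permT T τ) i
    have hTp := congrFun (hsym τ) i
    simp only [permT, Pi.sub_apply, Pi.smul_apply] at hsum hTp ⊢
    rw [hsum, hTp]
  · simp only [map_sub, map_sum, map_nsmul, formPoly_permT, h, Finset.sum_const, Finset.card_univ,
      Fintype.card_perm, Fintype.card_fin, Nat.cast_smul_eq_nsmul, sub_self]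

def opEval {d : ℕ} (A : Fin t → Fin n → Mat d) : ((Fin t → Fin n) → ℝ) →ₗ[ℝ] Mat d :=
  Fintype.linearCombination ℝ fun i => (List.ofFn fun s => A s (i s)).prod

lemma cbNormT_eq_sSup (T : (Fin t → Fin n) → ℝ) :
    cbNormT T = sSup {c : ℝ | ∃ (d : ℕ) (A : Fin t → Fin n → Mat d),
      (∀ s j, ‖A s j‖ ≤ 1) ∧ c = ‖opEval A T‖} := by
  simp only [cbNormT, opEval, Fintype.linearCombination_apply]

lemma norm_opEval_le {d : ℕ} {A : Fin t → Fin n → Mat d} (hA : ∀ s j, ‖A s j‖ ≤ 1)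
    (T : (Fin t → Fin n) → ℝ) : ‖opEval A T‖ ≤ ∑ i, |T i| := by
  rw [opEval, Fintype.linearCombination_apply]
  refine (norm_sum_le _ _).trans (Finset.sum_le_sum fun i _ => ?_)
  rw [norm_smul, Real.norm_eq_abs]
  refine mul_le_of_le_one_right (abs_nonneg _) (List.prod_induction (‖·‖ ≤ 1) ?_ ?_ ?_)
  · exact fun a b ha hb => (norm_mul_le a b).trans (mul_le_one₀ ha (norm_nonneg _) hb)
  · exact ContinuousLinearMap.norm_id_le
  · simp only [List.mem_ofFn, forall_exists_index, forall_apply_eq_imp_iff]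
    exact fun s => hA s (i s)

lemma norm_opEval_le_cbNormT {d : ℕ} {A : Fin t → Fin n → Mat d} (hA : ∀ s j, ‖A s j‖ ≤ 1)
    (T : (Fin t → Fin n) → ℝ) : ‖opEval A T‖ ≤ cbNormT T := by
  rw [cbNormT_eq_sSup]
  refine le_csSup ⟨∑ i, |T i|, ?_⟩ ⟨d, A, hA, rfl⟩
  rintro _ ⟨d, A, hA, rfl⟩
  exact norm_opEval_le hA T

lemma cbNormT_le {T : (Fin t → Fin n) → ℝ} {b : ℝ}
    (h : ∀ (d : ℕ) (A : Fin t → Fin n → Mat d), (∀ s j, ‖A s j‖ ≤ 1) → ‖opEval A T‖ ≤ b) :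
    cbNormT T ≤ b := by
  rw [cbNormT_eq_sSup]
  refine csSup_le ⟨_, 0, fun _ _ => 0, fun _ _ => by simp, rfl⟩ ?_
  rintro _ ⟨d, A, hA, rfl⟩
  exact h d A hA

lemma cbNormT_sum_le {ι : Type*} (s : Finset ι) (f : ι → (Fin t → Fin n) → ℝ) :
    cbNormT (∑ a ∈ s, f a) ≤ ∑ a ∈ s, cbNormT (f a) :=
  cbNormT_le fun _ _ hA => by
    rw [map_sum]
    exact (norm_sum_le _ _).trans (Finset.sum_le_sum fun a _ => norm_opEval_le_cbNormT hA _)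

lemma cbNormT_smul_le (c : ℝ) (T : (Fin t → Fin n) → ℝ) :
    cbNormT (c • T) ≤ |c| * cbNormT T :=
  cbNormT_le fun _ _ hA => by
    rw [map_smul, norm_smul, Real.norm_eq_abs]
    exact mul_le_mul_of_nonneg_left (norm_opEval_le_cbNormT hA T) (abs_nonneg c)

end TensorForm

open TensorForm in
theorem cb_norm_form_eq_inf_tensor (n t : ℕ) (Tp : (Fin t → Fin n) → ℝ)
    (hsym : ∀ σ : Equiv.Perm (Fin t), permT Tp σ = Tp) :
    sInf {c : ℝ | ∃ Ts : Equiv.Perm (Fin t) → ((Fin t → Fin n) → ℝ),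
        (∑ σ : Equiv.Perm (Fin t), permT (Ts σ) σ) = Tp ∧
        c = ∑ σ : Equiv.Perm (Fin t), cbNormT (Ts σ)} =
    sInf {c : ℝ | ∃ T : (Fin t → Fin n) → ℝ,
        (∀ x : Fin n → ℝ, tEval T x = tEval Tp x) ∧ c = cbNormT T} := by
  apply csInf_eq_csInf_of_forall_exists_le
  · rintro _ ⟨Ts, hTs, rfl⟩
    refine ⟨_, ⟨∑ σ, Ts σ, ?_, rfl⟩, cbNormT_sum_le _ _⟩
    rw [← formPoly_eq_formPoly_iff, ← hTs, map_sum, map_sum]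
    simp only [formPoly_permT]
  · rintro _ ⟨T, hT, rfl⟩
    have hfact : (t.factorial : ℝ) ≠ 0 := by positivity
    refine ⟨_, ⟨fun _ => (t.factorial : ℝ)⁻¹ • T, ?_, rfl⟩, ?_⟩
    · change ∑ σ, (t.factorial : ℝ)⁻¹ • permT T σ = Tp
      rw [← Finset.smul_sum, sum_permT_eq_factorial_smul hsym (formPoly_eq_formPoly_iff.2 hT),
        inv_smul_smul₀ hfact]
    · calc ∑ _σ : Equiv.Perm (Fin t), cbNormT ((t.factorial : ℝ)⁻¹ • T)
          ≤ ∑ _σ : Equiv.Perm (Fin t), |(t.factorial : ℝ)⁻¹| * cbNormT T :=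
            Finset.sum_le_sum fun _ _ => cbNormT_smul_le _ T
        _ = cbNormT T := by simp [Fintype.card_perm, hfact]
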